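/- Let m > 0, let O, v_O, ω : ℝ → ℝ³ be differentiable with O'(t) = v_O(t), and define the vector potential A(t,x) = m (v_O(t) + ω(t) × (x − O(t))) and the scalar potential φ(t,x) = ‖A(t,x)‖²/(2m) = (m/2) ‖v_O(t) + ω(t) × (x − O(t))‖². Define E(t,x) = (∇_x φ(t,·))(x) − ∂A/∂t(t,x). Then for all t ∈ ℝ and x ∈ ℝ³, E(t,x) = −m [ v_O'(t) + ω'(t) × (x − O(t)) + ω(t) × (ω(t) × (x − O(t))) ], i.e. E equals minus m times the dragging (translational) acceleration a_τ, so E is exactly the dragging force F_τ = −m a_τ. -/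

import Mathlib

noncomputable section
open scoped RealInnerProductSpace

/-- Euclidean 3-space. -/
abbrev E3 : Type := EuclideanSpace ℝ (Fin 3)

/-- Constructor for vectors in `E3` from three coordinates. -/
def vec3 (a b c : ℝ) : E3 := (WithLp.equiv 2 (Fin 3 → ℝ)).symm ![a, b, c]

/-- The cross product on `E3`. -/
def cross3 (a b : E3) : E3 :=
  vec3 (a 1 * b 2 - a 2 * b 1) (a 2 * b 0 - a 0 * b 2) (a 0 * b 1 - a 1 * b 0)

/-- `pderiv3 F j x i` is the partial derivative `∂_j F_i` at `x`. -/
def pderiv3 (F : E3 → E3) (j : Fin 3) (x : E3) (i : Fin 3) : ℝ :=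
  fderiv ℝ F x (EuclideanSpace.single j 1) i

/-- The curl `∇ × F` of a vector field on `E3`:
`(∇×F)_1 = ∂_2 F_3 − ∂_3 F_2`, `(∇×F)_2 = ∂_3 F_1 − ∂_1 F_3`, `(∇×F)_3 = ∂_1 F_2 − ∂_2 F_1`
(written here with 0-based indices). -/
def curl3 (F : E3 → E3) (x : E3) : E3 :=
  vec3 (pderiv3 F 1 x 2 - pderiv3 F 2 x 1)
       (pderiv3 F 2 x 0 - pderiv3 F 0 x 2)
       (pderiv3 F 0 x 1 - pderiv3 F 1 x 0)

/-- The divergence `∇ · F = ∂_1 F_1 + ∂_2 F_2 + ∂_3 F_3` of a vector field on `E3`. -/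
def div3 (F : E3 → E3) (x : E3) : ℝ :=
  pderiv3 F 0 x 0 + pderiv3 F 1 x 1 + pderiv3 F 2 x 2

/-!
The dragging velocity `v(y) = v_O + ω × (y − O)` is affine in `y` with skew-adjoint linear part
`y ↦ ω × y`, so `∇ₓ ((m/2) ‖v‖²) = −m ω × v = −m (ω × v_O + ω × (ω × (x − O)))`.
Differentiating `A = m v` in time gives `m (v_O' + ω' × (x − O) − ω × v_O)`, and the two
`ω × v_O` terms cancel in `E = ∇ₓ φ − ∂ₜ A`.
-/

lemma ofLp_cross3 (a b : E3) : (cross3 a b).ofLp = crossProduct a.ofLp b.ofLp := rfl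

lemma cross3_add_left (a b c : E3) : cross3 (a + b) c = cross3 a c + cross3 b c := by
  ext1; simp only [ofLp_cross3, WithLp.ofLp_add, map_add, LinearMap.add_apply]

lemma cross3_smul_left (r : ℝ) (a b : E3) : cross3 (r • a) b = r • cross3 a b := by
  ext1; simp only [ofLp_cross3, WithLp.ofLp_smul, map_smul, LinearMap.smul_apply]

lemma cross3_add_right (a b c : E3) : cross3 a (b + c) = cross3 a b + cross3 a c := by
  ext1; simp only [ofLp_cross3, WithLp.ofLp_add, map_add]

lemma cross3_smul_right (r : ℝ) (a b : E3) : cross3 a (r • b) = r • cross3 a b := by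
  ext1; simp only [ofLp_cross3, WithLp.ofLp_smul, map_smul]

lemma cross3_anticomm (a b : E3) : cross3 b a = -cross3 a b := by
  ext1; simp only [ofLp_cross3, WithLp.ofLp_neg, cross_anticomm]

lemma inner_cross3_left (a b c : E3) : ⟪cross3 a b, c⟫ = ⟪b, cross3 c a⟫ := by
  simp only [EuclideanSpace.inner_eq_star_dotProduct, star_trivial, ofLp_cross3]
  rw [dotProduct_comm (crossProduct _ _)]
  exact (triple_product_permutation _ _ _).symm

def cross3L : E3 →L[ℝ] E3 →L[ℝ] E3 :=
  (LinearMap.toContinuousLinearMap.toLinearMap ∘ₗ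
    LinearMap.mk₂ ℝ cross3 cross3_add_left cross3_smul_left cross3_add_right
      cross3_smul_right).toContinuousLinearMap

@[simp] lemma cross3L_apply (a b : E3) : cross3L a b = cross3 a b := rfl

lemma cross3_neg_right (a b : E3) : cross3 a (-b) = -cross3 a b := map_neg (cross3L a) b

lemma adjoint_cross3L (a : E3) : (cross3L a).adjoint = -cross3L a := by
  symm
  rw [ContinuousLinearMap.eq_adjoint_iff]
  intro b c
  simp [inner_cross3_left, cross3_anticomm c a]

lemma HasFDerivAt.hasGradientAt_half_mul_norm_sq {F G : Type*}
    [NormedAddCommGroup F] [InnerProductSpace ℝ F] [CompleteSpace F]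
    [NormedAddCommGroup G] [InnerProductSpace ℝ G] [CompleteSpace G]
    {f : F → G} {f' : F →L[ℝ] G} {x : F} (hf : HasFDerivAt f f' x) (c : ℝ) :
    HasGradientAt (fun y => c / 2 * ‖f y‖ ^ 2) (c • f'.adjoint (f x)) x := by
  rw [hasGradientAt_iff_hasFDerivAt]
  refine (hf.norm_sq.const_mul (c / 2)).congr_fderiv ?_
  ext h
  simp only [smul_apply, ContinuousLinearMap.comp_apply, coe_innerSL_apply,
    nsmul_eq_mul, Nat.cast_ofNat, smul_eq_mul, map_smul, InnerProductSpace.toDual_apply_apply,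
    ContinuousLinearMap.adjoint_inner_left]
  ring

lemma hasFDerivAt_add_cross3_sub (v a o x : E3) :
    HasFDerivAt (fun y => v + cross3 a (y - o)) (cross3L a) x := by
  simpa using (((cross3L a).hasFDerivAt.comp x ((hasFDerivAt_id x).sub_const o)).const_add v)

lemma hasGradientAt_half_mul_norm_sq_add_cross3_sub (m : ℝ) (v a o x : E3) :
    HasGradientAt (fun y => m / 2 * ‖v + cross3 a (y - o)‖ ^ 2)
      (-(m • cross3 a (v + cross3 a (x - o)))) x := by
  simpa [adjoint_cross3L] using
    (hasFDerivAt_add_cross3_sub v a o x).hasGradientAt_half_mul_norm_sq m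

lemma HasDerivAt.cross3 {f g : ℝ → E3} {f' g' : E3} {t : ℝ}
    (hf : HasDerivAt f f' t) (hg : HasDerivAt g g' t) :
    HasDerivAt (fun s => cross3 (f s) (g s)) (cross3 (f t) g' + cross3 f' (g t)) t :=
  cross3L.hasDerivAt_of_bilinear (fun _ => hf) (fun _ => hg)

lemma norm_smul_sq_div_two_mul {F : Type*} [NormedAddCommGroup F] [NormedSpace ℝ F]
    (m : ℝ) (w : F) : ‖m • w‖ ^ 2 / (2 * m) = m / 2 * ‖w‖ ^ 2 := by
  rw [norm_smul, mul_pow, Real.norm_eq_abs, sq_abs]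
  rcases eq_or_ne m 0 with rfl | hm
  · simp
  · field_simp

theorem E_eq_dragging_force_general (m : ℝ) (O vO ω : ℝ → E3)
    (hO : Differentiable ℝ O) (hvO : Differentiable ℝ vO) (hω : Differentiable ℝ ω)
    (hO' : ∀ t, deriv O t = vO t)
    (A : ℝ → E3 → E3) (hA : ∀ t x, A t x = m • (vO t + cross3 (ω t) (x - O t)))
    (φ : ℝ → E3 → ℝ) (hφ : ∀ t x, φ t x = ‖A t x‖ ^ 2 / (2 * m))
    (Efld : ℝ → E3 → E3)
    (hE : ∀ t x, Efld t x = gradient (φ t) x - deriv (fun s => A s x) t)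
    (t : ℝ) (x : E3) :
    Efld t x = -(m • (deriv vO t + cross3 (deriv ω t) (x - O t)
      + cross3 (ω t) (cross3 (ω t) (x - O t)))) := by
  have hφt : φ t = fun y => m / 2 * ‖vO t + cross3 (ω t) (y - O t)‖ ^ 2 := by
    funext y; rw [hφ, hA, norm_smul_sq_div_two_mul]
  have hOt : HasDerivAt O (vO t) t := hO' t ▸ (hO t).hasDerivAt
  have hAt : HasDerivAt (fun s => A s x)
      (m • (deriv vO t + (cross3 (ω t) (-vO t) + cross3 (deriv ω t) (x - O t)))) t := by
    simp_rw [hA]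
    exact ((hvO t).hasDerivAt.add ((hω t).hasDerivAt.cross3 (hOt.const_sub x))).const_smul m
  rw [hE, hφt, (hasGradientAt_half_mul_norm_sq_add_cross3_sub m _ _ _ x).gradient, hAt.deriv]
  simp only [cross3_add_right, cross3_neg_right]
  module

/-- For the vector potential `A = m v_τ` and scalar potential
`φ = ‖A‖²/(2m) = (m/2)‖v_τ‖²` of a rigid frame motion, the field `E = ∇ₓφ − ∂A/∂t`
equals minus `m` times the dragging acceleration
`a_τ = a_O + ω' × (x − O) + ω × (ω × (x − O))`, i.e. `E` is the dragging force `−m a_τ`. -/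
theorem E_eq_dragging_force (m : ℝ) (hm : 0 < m) (O vO ω : ℝ → E3)
    (hO : Differentiable ℝ O) (hvO : Differentiable ℝ vO) (hω : Differentiable ℝ ω)
    (hO' : ∀ t, deriv O t = vO t)
    (A : ℝ → E3 → E3) (hA : ∀ t x, A t x = m • (vO t + cross3 (ω t) (x - O t)))
    (φ : ℝ → E3 → ℝ) (hφ : ∀ t x, φ t x = ‖A t x‖ ^ 2 / (2 * m))
    (Efld : ℝ → E3 → E3)
    (hE : ∀ t x, Efld t x = gradient (φ t) x - deriv (fun s => A s x) t)
    (t : ℝ) (x : E3) :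
    Efld t x = -(m • (deriv vO t + cross3 (deriv ω t) (x - O t)
      + cross3 (ω t) (cross3 (ω t) (x - O t)))) :=
  E_eq_dragging_force_general m O vO ω hO hvO hω hO' A hA φ hφ Efld hE t x
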